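/- arXiv:1208.1537 — 2 statements merged into one kernel-verified Lean document; each statement's English description precedes it below -/
import Mathlib

section
/- With f_{s,k,i} and α_{s,k,i} as defined, for all positive integers u and 1 ≤ i ≤ k-2: f_{s,k,i}(u)/f_{s,k,i+1}(u) = ∑_{d|u} μ(d) C(s,i)^{ω(d)} / α_{s,k,i}(d), where μ is the Möbius function and ω(d) the number of distinct prime factors of d. -/
/-- `f_{s,k,i}(u)`. -/
noncomputable def f (s k i u : ℕ) : ℝ :=
  ∏ p ∈ u.primeFactors,
    (1 - (∑ m ∈ Finset.Icc i (k-1), (s.choose m : ℝ) * ((p:ℝ) - 1)^(k-1-m)) /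
         (∑ m ∈ Finset.range k, (s.choose m : ℝ) * ((p:ℝ) - 1)^(k-1-m)))

/-- `α_{s,k,i}(d)`. -/
noncomputable def alpha (s i d : ℕ) : ℝ :=
  (d:ℝ)^i * ∏ p ∈ d.primeFactors,
    ∑ m ∈ Finset.range (i+1), (s.choose m : ℝ) * (1 - 1/(p:ℝ))^(i-m) * (1/(p:ℝ))^m

/-!
Both sides are products over the primes `p ∣ u`. The right side is `∑_{d ∣ u} μ(d) w(d)` for
the multiplicative weight `w(d) = C(s,i)^{ω(d)} / α(d)`, hence equals `∏_{p ∣ u} (1 - w(p))`.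
On the left, put `x = p - 1` and `S_j = ∑_{m<j} C(s,m) x^{k-1-m}`: the `p`-factor of `f_{s,k,j}`
is `S_j / S_k`, so that of the ratio is `S_i / S_{i+1}`. Dividing out `x^{k-1-i}` turns `S_j`
into `T_j = ∑_{m<j} C(s,m) x^{i-m}`, and `T_i / T_{i+1} = 1 - C(s,i) / T_{i+1}` with
`T_{i+1} = α(p)`.
-/

open Finset ArithmeticFunction
open scoped ArithmeticFunction.Moebius

theorem ArithmeticFunction.IsMultiplicative.sum_divisors_moebius_mul {R : Type*} [CommRing R]
    {g : ArithmeticFunction R} (hg : g.IsMultiplicative) {n : ℕ} (hn : n ≠ 0) :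
    ∑ d ∈ n.divisors, μ d * g d = ∏ p ∈ n.primeFactors, (1 - g p) := by
  rw [← Nat.primeFactors_radical, hg.prodPrimeFactors_one_sub_of_squarefree _
    UniqueFactorizationMonoid.squarefree_radical]
  refine (sum_subset (Nat.divisors_subset_of_dvd hn UniqueFactorizationMonoid.radical_dvd_self)
    fun d hd hdr => ?_).symm
  have hd_not_squarefree : ¬ Squarefree d := fun hsq =>
    hdr <| Nat.mem_divisors.mpr ⟨(UniqueFactorizationMonoid.dvd_radical_iff hsq.isRadical hn).mpr
      (Nat.dvd_of_mem_divisors hd), UniqueFactorizationMonoid.radical_ne_zero⟩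
  simp [moebius_eq_zero_of_not_squarefree hd_not_squarefree]

theorem Finset.one_sub_sum_Icc_div_sum_range {K : Type*} [Field K] (a : ℕ → K) {j k : ℕ}
    (hjk : j ≤ k) (hk : ∑ m ∈ range k, a m ≠ 0) :
    1 - (∑ m ∈ Icc j (k - 1), a m) / ∑ m ∈ range k, a m
      = (∑ m ∈ range j, a m) / ∑ m ∈ range k, a m := by
  have hk0 : ¬ IsMin k := by rintro h; simp [h.eq_bot] at hk
  rw [Icc_sub_one_right_eq_Ico_of_not_isMin hk0, eq_div_iff hk, sub_mul, one_mul,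
    div_mul_cancel₀ _ hk, ← sum_range_add_sum_Ico a hjk, add_sub_cancel_right]

theorem Nat.Prime.cast_sub_one_pos {p : ℕ} (hp : p.Prime) : (0 : ℝ) < p - 1 :=
  sub_pos.mpr (by exact_mod_cast hp.one_lt)

noncomputable def truncBinomSum (s e j : ℕ) (x : ℝ) : ℝ :=
  ∑ m ∈ range j, (s.choose m : ℝ) * x ^ (e - m)

theorem truncBinomSum_pos (s e : ℕ) {j : ℕ} {x : ℝ} (hj : 0 < j) (hx : 0 < x) :
    0 < truncBinomSum s e j x :=
  sum_pos' (fun _ _ => by positivity) ⟨0, mem_range.mpr hj, by simp [pow_pos hx]⟩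

theorem truncBinomSum_succ (s e j : ℕ) (x : ℝ) :
    truncBinomSum s e (j + 1) x = truncBinomSum s e j x + s.choose j * x ^ (e - j) :=
  sum_range_succ _ _

theorem truncBinomSum_eq_pow_mul {s e e' j : ℕ} (x : ℝ) (he : e' ≤ e) (hj : j ≤ e' + 1) :
    truncBinomSum s e j x = x ^ (e - e') * truncBinomSum s e' j x := by
  rw [truncBinomSum, truncBinomSum, mul_sum]
  refine sum_congr rfl fun m hm => ?_
  have hm : m < j := mem_range.mp hm
  rw [mul_left_comm, ← pow_add]
  congr 2
  omega

theorem truncBinomSum_div_succ {s e i : ℕ} {x : ℝ} (hx : 0 < x) (hie : i ≤ e) :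
    truncBinomSum s e i x / truncBinomSum s e (i + 1) x
      = 1 - s.choose i / truncBinomSum s i (i + 1) x := by
  have hT := truncBinomSum_pos s i (Nat.succ_pos i) hx
  rw [truncBinomSum_eq_pow_mul x hie (Nat.le_succ i), truncBinomSum_eq_pow_mul x hie le_rfl,
    mul_div_mul_left _ _ (pow_ne_zero _ hx.ne'), eq_sub_iff_add_eq, ← add_div,
    div_eq_one_iff_eq hT.ne', truncBinomSum_succ, Nat.sub_self, pow_zero, mul_one]

theorem alpha_prime (s i : ℕ) {p : ℕ} (hp : p.Prime) :
    alpha s i p = truncBinomSum s i (i + 1) (p - 1) := by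
  have hp0 : (p : ℝ) ≠ 0 := by exact_mod_cast hp.ne_zero
  rw [alpha, hp.primeFactors, prod_singleton, truncBinomSum, mul_sum]
  refine sum_congr rfl fun m hm => ?_
  obtain ⟨n, rfl⟩ := Nat.exists_eq_add_of_le (Nat.lt_succ_iff.mp (mem_range.mp hm))
  rw [Nat.add_sub_cancel_left, one_sub_div hp0, div_pow, one_div_pow, pow_add]
  field_simp

theorem f_eq_prod_div {s k i : ℕ} (u : ℕ) (hk : 0 < k) (hik : i ≤ k) :
    f s k i u = ∏ p ∈ u.primeFactors,
      truncBinomSum s (k - 1) i (p - 1) / truncBinomSum s (k - 1) k (p - 1) := by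
  refine prod_congr rfl fun p hp => ?_
  have hx := (Nat.prime_of_mem_primeFactors hp).cast_sub_one_pos
  exact one_sub_sum_Icc_div_sum_range (fun m => (s.choose m : ℝ) * ((p : ℝ) - 1) ^ (k - 1 - m))
    hik (truncBinomSum_pos s (k - 1) hk hx).ne'

theorem f_div_f_succ_eq_prod {s k i : ℕ} (u : ℕ) (hik : i < k) :
    f s k i u / f s k (i + 1) u = ∏ p ∈ u.primeFactors,
      truncBinomSum s (k - 1) i (p - 1) / truncBinomSum s (k - 1) (i + 1) (p - 1) := by
  rw [f_eq_prod_div u (by omega) hik.le, f_eq_prod_div u (by omega) hik, ← prod_div_distrib]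
  refine prod_congr rfl fun p hp => ?_
  have hx := (Nat.prime_of_mem_primeFactors hp).cast_sub_one_pos
  exact div_div_div_cancel_right₀ (truncBinomSum_pos s (k - 1) (by omega) hx).ne' _ _

noncomputable def alphaWeight (s i : ℕ) : ArithmeticFunction ℝ :=
  ⟨fun d => if d = 0 then 0 else (s.choose i : ℝ) ^ d.primeFactors.card / alpha s i d,
    if_pos rfl⟩

theorem alphaWeight_apply (s i : ℕ) {d : ℕ} (hd : d ≠ 0) :
    alphaWeight s i d = (s.choose i : ℝ) ^ d.primeFactors.card / alpha s i d :=
  if_neg hd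

theorem alpha_mul_of_coprime (s i : ℕ) {m n : ℕ} (hm : m ≠ 0) (hn : n ≠ 0)
    (hmn : m.Coprime n) :
    alpha s i (m * n) = alpha s i m * alpha s i n := by
  rw [alpha, alpha, alpha, Nat.cast_mul, mul_pow, Nat.primeFactors_mul hm hn,
    prod_union hmn.disjoint_primeFactors]
  ring

theorem isMultiplicative_alphaWeight (s i : ℕ) : (alphaWeight s i).IsMultiplicative := by
  refine IsMultiplicative.iff_ne_zero.mpr
    ⟨by simp [alphaWeight_apply, alpha], fun hm hn hmn => ?_⟩
  rw [alphaWeight_apply s i (mul_ne_zero hm hn), alphaWeight_apply s i hm,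
    alphaWeight_apply s i hn, alpha_mul_of_coprime s i hm hn hmn, Nat.primeFactors_mul hm hn,
    card_union_of_disjoint hmn.disjoint_primeFactors, pow_add, mul_div_mul_comm]

theorem alphaWeight_prime (s i : ℕ) {p : ℕ} (hp : p.Prime) :
    alphaWeight s i p = s.choose i / truncBinomSum s i (i + 1) (p - 1) := by
  rw [alphaWeight_apply s i hp.ne_zero, hp.primeFactors, card_singleton, pow_one,
    alpha_prime s i hp]

open ArithmeticFunction in
theorem f_ratio_eq_divisor_sum_general (s k i u : ℕ) (hk : 3 ≤ k)
    (hu : 0 < u) (hik : i ≤ k - 2) :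
    f s k i u / f s k (i+1) u
      = ∑ d ∈ u.divisors,
          (moebius d : ℝ) * (s.choose i : ℝ)^(d.primeFactors.card) / alpha s i d := by
  have hdivisor_sum : ∑ d ∈ u.divisors,
      (moebius d : ℝ) * (s.choose i : ℝ)^(d.primeFactors.card) / alpha s i d
        = ∑ d ∈ u.divisors, (μ d : ℝ) * alphaWeight s i d :=
    sum_congr rfl fun d hd => by
      rw [alphaWeight_apply s i (Nat.pos_of_mem_divisors hd).ne', mul_div_assoc]
  rw [hdivisor_sum, (isMultiplicative_alphaWeight s i).sum_divisors_moebius_mul hu.ne',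
    f_div_f_succ_eq_prod u (by omega)]
  refine prod_congr rfl fun p hp => ?_
  have hp_prime := Nat.prime_of_mem_primeFactors hp
  rw [alphaWeight_prime s i hp_prime, truncBinomSum_div_succ hp_prime.cast_sub_one_pos (by omega)]

open ArithmeticFunction in
theorem f_ratio_eq_divisor_sum (s k i u : ℕ) (hs : 1 ≤ s) (hk : 3 ≤ k)
    (hu : 0 < u) (hi1 : 1 ≤ i) (hik : i ≤ k - 2) :
    f s k i u / f s k (i+1) u
      = ∑ d ∈ u.divisors,
          (moebius d : ℝ) * (s.choose i : ℝ)^(d.primeFactors.card) / alpha s i d :=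
  f_ratio_eq_divisor_sum_general s k i u hk hu hik
end

section
/- The infinite product A_{s,k} = ∏_p (1-1/p)^{s-k+1} ∑_{m=0}^{k-1} C(s,m)(1-1/p)^{k-1-m} p^{-m} over all primes p converges to a positive real number whenever s ≥ k ≥ 2. -/
/-!
At a prime `p`, an `s`-tuple fails to be `k`-wise coprime exactly when at least `k` of its
entries are divisible by `p`, so with `x = 1/p` the Euler factor is the binomial probability
`1 - ∑_{m ≥ k} C(s,m) x^m (1-x)^(s-m)` that fewer than `k` entries are. This deficit is at most
`2^s x^k ≤ 2^s / p^2`, which is summable over the primes, and every factor is positive, so the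
logarithms of the factors are summable and the product is the exponential of their sum.
-/

open Finset

theorem Real.multipliable_and_tprod_pos_of_summable_one_sub {ι : Type*} {f : ι → ℝ}
    (hpos : ∀ i, 0 < f i) (hsum : Summable fun i ↦ 1 - f i) :
    Multipliable f ∧ 0 < ∏' i, f i := by
  have hlog : Summable fun i ↦ Real.log (f i) := by
    simpa using Real.summable_log_one_add_of_summable hsum.neg
  refine ⟨Real.multipliable_of_summable_log hpos hlog, ?_⟩
  rw [← Real.rexp_tsum_eq_tprod hpos hlog]
  exact Real.exp_pos _

theorem one_sub_pow_mul_sum_range_choose {R : Type*} [CommRing R] (x : R) {s k : ℕ}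
    (hks : k ≤ s) :
    (1 - x) ^ (s - k + 1) * ∑ m ∈ range k, (s.choose m : R) * (1 - x) ^ (k - 1 - m) * x ^ m
      = 1 - ∑ m ∈ Ico k (s + 1), (s.choose m : R) * (1 - x) ^ (s - m) * x ^ m := by
  have hbinom : ∑ m ∈ range (s + 1), (s.choose m : R) * (1 - x) ^ (s - m) * x ^ m = 1 := by
    have h := add_pow x (1 - x) s
    rw [add_sub_cancel, one_pow] at h
    exact (sum_congr rfl fun m _ ↦ by ring).trans h.symm
  calc (1 - x) ^ (s - k + 1) * ∑ m ∈ range k, (s.choose m : R) * (1 - x) ^ (k - 1 - m) * x ^ m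
      = ∑ m ∈ range k, (s.choose m : R) * (1 - x) ^ (s - m) * x ^ m := by
        rw [mul_sum]
        refine sum_congr rfl fun m hm ↦ ?_
        rw [show s - m = (s - k + 1) + (k - 1 - m) by grind, pow_add]
        ring
    _ = 1 - ∑ m ∈ Ico k (s + 1), (s.choose m : R) * (1 - x) ^ (s - m) * x ^ m := by
        rw [eq_sub_iff_add_eq, sum_range_add_sum_Ico _ (by omega), hbinom]

theorem sum_Ico_choose_mul_pow_le {x : ℝ} (hx0 : 0 ≤ x) (hx1 : x ≤ 1) (s k : ℕ) :
    ∑ m ∈ Ico k (s + 1), (s.choose m : ℝ) * (1 - x) ^ (s - m) * x ^ m ≤ 2 ^ s * x ^ k :=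
  calc ∑ m ∈ Ico k (s + 1), (s.choose m : ℝ) * (1 - x) ^ (s - m) * x ^ m
      ≤ ∑ m ∈ Ico k (s + 1), (s.choose m : ℝ) * x ^ k := by
        refine sum_le_sum fun m hm ↦ ?_
        have h1 : (1 - x) ^ (s - m) ≤ 1 := pow_le_one₀ (by linarith) (by linarith)
        have h2 : x ^ m ≤ x ^ k := pow_le_pow_of_le_one hx0 hx1 (mem_Ico.mp hm).1
        simpa using mul_le_mul (mul_le_mul_of_nonneg_left h1 (s.choose m).cast_nonneg) h2
          (by positivity) (by positivity)
    _ ≤ ∑ m ∈ range (s + 1), (s.choose m : ℝ) * x ^ k :=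
        sum_le_sum_of_subset_of_nonneg (fun m hm ↦ mem_range.mpr (mem_Ico.mp hm).2)
          fun m _ _ ↦ by positivity
    _ = 2 ^ s * x ^ k := by
        rw [← sum_mul, ← Nat.cast_sum, Nat.sum_range_choose, Nat.cast_pow, Nat.cast_two]

theorem sum_Ico_choose_mul_pow_nonneg {x : ℝ} (hx0 : 0 ≤ x) (hx1 : x ≤ 1) (s k : ℕ) :
    0 ≤ ∑ m ∈ Ico k (s + 1), (s.choose m : ℝ) * (1 - x) ^ (s - m) * x ^ m :=
  sum_nonneg fun m _ ↦
    mul_nonneg (mul_nonneg (s.choose m).cast_nonneg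
      (pow_nonneg (sub_nonneg.mpr hx1) _)) (pow_nonneg hx0 _)

theorem one_sub_pow_mul_sum_range_choose_pos {x : ℝ} (hx0 : 0 ≤ x) (hx1 : x < 1) (s : ℕ)
    {k : ℕ} (hk : 0 < k) :
    0 < (1 - x) ^ (s - k + 1) *
      ∑ m ∈ range k, (s.choose m : ℝ) * (1 - x) ^ (k - 1 - m) * x ^ m := by
  have h1x : 0 < 1 - x := by linarith
  refine mul_pos (by positivity)
    (sum_pos' (fun m _ ↦ by positivity) ⟨0, mem_range.mpr hk, ?_⟩)
  simpa using pow_pos h1x (k - 1)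

theorem Nat.Primes.summable_one_div_pow {k : ℕ} (hk : 1 < k) :
    Summable fun p : Nat.Primes ↦ (1 / (p : ℝ)) ^ k := by
  have h : -(k : ℝ) < -1 := by exact_mod_cast (by omega : -(k : ℤ) < -1)
  simpa [Real.rpow_neg, Real.rpow_natCast] using Nat.Primes.summable_rpow.mpr h

theorem euler_product_converges_pos (s k : ℕ) (hk : 2 ≤ k) (hks : k ≤ s) :
    Multipliable (fun p : Nat.Primes =>
      (1 - 1/((p:ℕ):ℝ))^(s-k+1) *
        ∑ m ∈ Finset.range k, (s.choose m : ℝ) * (1 - 1/((p:ℕ):ℝ))^(k-1-m) * (1/((p:ℕ):ℝ))^m) ∧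
    0 < ∏' p : Nat.Primes,
      (1 - 1/((p:ℕ):ℝ))^(s-k+1) *
        ∑ m ∈ Finset.range k, (s.choose m : ℝ) * (1 - 1/((p:ℕ):ℝ))^(k-1-m) * (1/((p:ℕ):ℝ))^m := by
  have hx (p : Nat.Primes) : 0 ≤ 1 / ((p : ℕ) : ℝ) ∧ 1 / ((p : ℕ) : ℝ) < 1 :=
    ⟨by positivity,
      (div_lt_one (by exact_mod_cast p.2.pos)).mpr (by exact_mod_cast p.2.one_lt)⟩
  refine Real.multipliable_and_tprod_pos_of_summable_one_sub
    (fun p ↦ one_sub_pow_mul_sum_range_choose_pos (hx p).1 (hx p).2 s (by omega)) ?_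
  have hdom := (Nat.Primes.summable_one_div_pow (by omega : 1 < k)).mul_left (2 ^ s)
  refine hdom.of_nonneg_of_le (fun p ↦ ?_) fun p ↦ ?_
  all_goals rw [one_sub_pow_mul_sum_range_choose _ hks, sub_sub_cancel]
  · exact sum_Ico_choose_mul_pow_nonneg (hx p).1 (hx p).2.le s k
  · exact sum_Ico_choose_mul_pow_le (hx p).1 (hx p).2.le s k
end
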